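/- Let M be a monoid, A a group, α : M → A a monoid homomorphism, and G = Mˣ the group of units. Suppose every element of M can be written g * n with g ∈ G and n ∈ α⁻¹(1). Then M is regular if and only if the submonoid N = α⁻¹(1) is regular. -/
import Mathlib

theorem regular_iff_fiber_regular {M A : Type*} [Monoid M] [Group A]
    (α : M →* A)
    (hGN : ∀ x : M, ∃ (g : Mˣ) (n : M), α n = 1 ∧ x = (g : M) * n) :
    (∀ x : M, ∃ y : M, x = x * y * x) ↔
    (∀ x : M, α x = 1 → ∃ y : M, α y = 1 ∧ x = x * y * x) := by
  constructor
  · intro h x hx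
    obtain ⟨y, hy⟩ := h x
    refine ⟨y, ?_, hy⟩
    have : α x = α (x * y * x) := by rw [← hy]
    simpa [hx] using this.symm
  · intro h x
    obtain ⟨g, n, hn, hx⟩ := hGN x
    obtain ⟨y, hy1, hy2⟩ := h n hn
    refine ⟨y * (g⁻¹ : Mˣ), ?_⟩
    calc x = (g : M) * n := hx
      _ = (g : M) * (n * y * n) := by rw [← hy2]
      _ = ((g : M) * n) * (y * (g⁻¹ : Mˣ)) * ((g : M) * n) := by
          simp [mul_assoc]
      _ = x * (y * (g⁻¹ : Mˣ)) * x := by rw [← hx]
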